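/- arXiv:math/0008229 — 3 statements merged into one kernel-verified Lean document; each statement's English description precedes it below -/
import Mathlib

section
/- Let p be an odd prime and let 1 → Z^r → Γ → Z^l → 1 be an irreducible central extension classified by a subgroup K ⊆ H^2(Z^l; Z). Let G(p) be the central extension 1 → (Z/p)^r → G(p) → (Z/p²)^l → 1 classified by K_p = (π^*)^{-1}([K]), where π: Z^l → (Z/p²)^l is reduction mod p², [K] is the mod p reduction of K, and π^*: H^2((Z/p²)^l; Z/p) → H^2(Z^l; Z/p). Then G(p) is a finite p-group satisfying the pC condition (every element of order p in G(p) is central), and G(p) can be expressed as a central Frattini extension 1 → (Z/p)^{r+l} → G(p) → (Z/p)^l → 1. -/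
/-!
STATEMENT 4.  Let `1 → ℤ^r → Γ → ℤ^l → 1` be an irreducible central extension
(classified by a subgroup `K ⊆ H²(ℤ^l;ℤ)`, i.e. by its commutator form), and let
`G(p)` be the central extension `1 → (ℤ/p)^r → G(p) → (ℤ/p²)^l → 1` classified by
`K_p = (π^*)⁻¹([K])`.  Since `K_p` consists of classes which are decomposable
(products of one-dimensional classes), the extension `G(p)` is characterized by:
its `Ext`-component vanishes (equivalently `G(p)` has exponent dividing `p²`) and
its commutator form is the mod `p` reduction of the commutator form of `Γ`.

Conclusion: `G(p)` is a finite `p`-group satisfying the `pC` condition (every element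
of order `p` is central), and it can be expressed as a central Frattini extension
`1 → (ℤ/p)^{r+l} → G(p) → (ℤ/p)^l → 1`.
-/

section Helpers

variable {p : ℕ} [Fact p.Prime]

lemma zmodsq_of_dvd_val {x : ZMod (p^2)} (h : p ∣ x.val) :
    ∃ y : ZMod (p^2), x = (p : ZMod (p^2)) * y := by
  haveI : NeZero (p^2) := ⟨pow_ne_zero 2 (Fact.out (p := p.Prime)).ne_zero⟩
  obtain ⟨m, hm⟩ := h
  refine ⟨(m : ZMod (p^2)), ?_⟩
  have : ((x.val : ℕ) : ZMod (p^2)) = x := ZMod.natCast_rightInverse x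
  rw [← this, hm]
  push_cast
  ring

lemma zmodsq_dvd_of_mul_zero {x : ZMod (p^2)} (h : (p : ZMod (p^2)) * x = 0) :
    p ∣ x.val := by
  haveI : NeZero (p^2) := ⟨pow_ne_zero 2 (Fact.out (p := p.Prime)).ne_zero⟩
  have hx : ((x.val : ℕ) : ZMod (p^2)) = x := ZMod.natCast_rightInverse x
  have : ((p * x.val : ℕ) : ZMod (p^2)) = 0 := by push_cast; rw [hx, h]
  have hdvd : p^2 ∣ p * x.val := (ZMod.natCast_eq_zero_iff _ _).mp this
  have hp : p ≠ 0 := (Fact.out (p := p.Prime)).ne_zero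
  have : p * p ∣ p * x.val := by rwa [← pow_two]
  exact (mul_dvd_mul_iff_left hp).mp this

lemma zmodsq_dvd_of_cast_zero {x : ZMod (p^2)}
    (h : ZMod.castHom (dvd_pow_self p two_ne_zero) (ZMod p) x = 0) : p ∣ x.val := by
  haveI : NeZero (p^2) := ⟨pow_ne_zero 2 (Fact.out (p := p.Prime)).ne_zero⟩
  have hx : ((x.val : ℕ) : ZMod (p^2)) = x := ZMod.natCast_rightInverse x
  have : ((x.val : ℕ) : ZMod p) = 0 := by
    rw [← map_natCast (ZMod.castHom (dvd_pow_self p two_ne_zero) (ZMod p)) x.val, hx, h]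
  exact (ZMod.natCast_eq_zero_iff _ _).mp this

lemma zmodsq_cast_mul_self (y : ZMod (p^2)) :
    ZMod.castHom (dvd_pow_self p two_ne_zero) (ZMod p) ((p : ZMod (p^2)) * y) = 0 := by
  rw [map_mul, map_natCast, ZMod.natCast_self, zero_mul]

end Helpers

section CommHelpers

open scoped commutatorElement

variable {G : Type} [Group G]

lemma comm_mul_left_of_central (hc : ∀ a b : G, ⁅a, b⁆ ∈ Subgroup.center G)
    (a b c : G) : ⁅a * b, c⁆ = ⁅a, c⁆ * ⁅b, c⁆ := by
  have h1 : ⁅a * b, c⁆ = a * ⁅b, c⁆ * a⁻¹ * ⁅a, c⁆ := by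
    simp only [commutatorElement_def]
    group
  have h2 : a * ⁅b, c⁆ = ⁅b, c⁆ * a := (Subgroup.mem_center_iff.mp (hc b c)) a
  have h3 : ⁅a, c⁆ * ⁅b, c⁆ = ⁅b, c⁆ * ⁅a, c⁆ := (Subgroup.mem_center_iff.mp (hc b c)) _
  rw [h1, h2, mul_inv_cancel_right, h3]

lemma comm_pow_left_of_central (hc : ∀ a b : G, ⁅a, b⁆ ∈ Subgroup.center G)
    (a c : G) (n : ℕ) : ⁅a ^ n, c⁆ = ⁅a, c⁆ ^ n := by
  induction n with
  | zero => simp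
  | succ n ih =>
    rw [pow_succ, comm_mul_left_of_central hc, ih, pow_succ]

end CommHelpers

/-- Componentwise reduction `(ℤ/p²)^l → (ℤ/p)^l`, additively. -/
def addRed (p l : ℕ) [Fact p.Prime] :
    (Fin l → ZMod (p^2)) →+ (Fin l → ZMod p) where
  toFun x := fun t => ZMod.castHom (dvd_pow_self p two_ne_zero) (ZMod p) (x t)
  map_zero' := funext fun t => map_zero _
  map_add' x y := funext fun t => map_add _ _ _

/-- Componentwise reduction `(ℤ/p²)^l → (ℤ/p)^l`, multiplicatively. -/
def redHom (p l : ℕ) [Fact p.Prime] :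
    Multiplicative (Fin l → ZMod (p^2)) →* Multiplicative (Fin l → ZMod p) :=
  AddMonoidHom.toMultiplicative (addRed p l)

lemma redHom_apply (p l : ℕ) [Fact p.Prime] (x : Multiplicative (Fin l → ZMod (p^2)))
    (t : Fin l) :
    Multiplicative.toAdd (redHom p l x) t
      = ZMod.castHom (dvd_pow_self p two_ne_zero) (ZMod p) (Multiplicative.toAdd x t) := rfl

lemma redHom_surjective (p l : ℕ) [Fact p.Prime] : Function.Surjective (redHom p l) := by
  haveI : NeZero p := ⟨(Fact.out (p := p.Prime)).ne_zero⟩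
  intro w
  refine ⟨Multiplicative.ofAdd (fun t => ((Multiplicative.toAdd w t).val : ZMod (p^2))), ?_⟩
  have : Multiplicative.toAdd (redHom p l (Multiplicative.ofAdd
      (fun t => ((Multiplicative.toAdd w t).val : ZMod (p^2))))) = Multiplicative.toAdd w := by
    funext t
    rw [redHom_apply]
    simp only [toAdd_ofAdd, map_natCast]
    exact ZMod.natCast_rightInverse _
  rw [← ofAdd_toAdd (redHom p l _), this, ofAdd_toAdd]

/-- Non-reducible wrapper to avoid unification unfolding issues. -/
def zmodModuleOfExp (p : ℕ) (G : Type) [AddCommGroup G] (h : ∀ x : G, p • x = 0) :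
    Module (ZMod p) G := AddCommGroup.zmodModule h

open Module in
lemma elemAbelianEquiv (p n : ℕ) [Fact p.Prime] (G : Type) [CommGroup G] [Finite G]
    (hexp : ∀ x : G, x ^ p = 1) (hcard : Nat.card G = p ^ n) :
    Nonempty (Multiplicative (Fin n → ZMod p) ≃* G) := by
  haveI : NeZero p := ⟨(Fact.out (p := p.Prime)).ne_zero⟩
  letI : Module (ZMod p) (Additive G) := zmodModuleOfExp p (Additive G) (by
    intro x
    have h1 : Additive.toMul (p • x) = Additive.toMul (0 : Additive G) := by
      rw [toMul_nsmul, hexp]; rfl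
    exact Additive.toMul.injective h1)
  haveI : Fintype G := Fintype.ofFinite _
  haveI : Fintype (Additive G) := Fintype.ofFinite _
  haveI : Module.Finite (ZMod p) (Additive G) := Module.Finite.of_finite
  have hp : p.Prime := Fact.out
  have hfr : Module.finrank (ZMod p) (Additive G) = n := by
    have hcard2 : Fintype.card (Additive G) = p ^ Module.finrank (ZMod p) (Additive G) := by
      have := card_eq_pow_finrank (K := ZMod p) (V := Additive G)
      rwa [ZMod.card] at this
    have h2 : Fintype.card (Additive G) = p ^ n := by
      rw [← Nat.card_eq_fintype_card, Nat.card_congr Additive.toMul, hcard]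
    have h3 : p ^ Module.finrank (ZMod p) (Additive G) = p ^ n := by rw [← hcard2, h2]
    exact Nat.pow_right_injective hp.two_le h3
  let b : Basis (Fin n) (ZMod p) (Additive G) :=
    Module.finBasisOfFinrankEq (ZMod p) (Additive G) hfr
  let E0 : (Fin n → ZMod p) ≃ₗ[ZMod p] Additive G := b.equivFun.symm
  exact ⟨(AddEquiv.toMultiplicative E0.toAddEquiv).trans (MulEquiv.multiplicativeAdditive G)⟩

/-- Bundled data of a central extension `1 → V → G → W → 1`. -/
structure CentralExtension (V G W : Type) [Group V] [Group G] [Group W] where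
  ι : V →* G
  π : G →* W
  ι_injective : Function.Injective ι
  π_surjective : Function.Surjective π
  range_eq_ker : ι.range = π.ker
  range_le_center : ι.range ≤ Subgroup.center G

/-- The subgroup `G^p[G,G]`, whose quotient computes `H_1(G; ℤ/p)`. -/
def pPowerCommutatorSubgroup (p : ℕ) (G : Type) [Group G] : Subgroup G :=
  commutator G ⊔ Subgroup.closure {x : G | ∃ g : G, g ^ p = x}

/-- Componentwise reduction `ℤ^k → (ℤ/m)^k`. -/
def vecIntReduce (k m : ℕ) : (Fin k → ℤ) →+ (Fin k → ZMod m) where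
  toFun x := fun t => (x t : ZMod m)
  map_zero' := by funext t; simp
  map_add' x y := by funext t; simp

open scoped commutatorElement

theorem Gp_is_pC_and_Frattini
    (p r l : ℕ) [Fact p.Prime] (hodd : Odd p)
    -- the irreducible central extension `1 → ℤ^r → Γ → ℤ^l → 1`
    (Γ : Type) [Group Γ]
    (EΓ : CentralExtension (Multiplicative (Fin r → ℤ)) Γ (Multiplicative (Fin l → ℤ)))
    (hirr : Nonempty (Abelianization Γ ≃* Multiplicative (Fin l → ℤ)))
    -- `G(p)`: the central extension `1 → (ℤ/p)^r → G(p) → (ℤ/p²)^l → 1` classified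
    -- by `K_p = (π^*)⁻¹([K])`:
    (Gp : Type) [Group Gp]
    (EGp : CentralExtension (Multiplicative (Fin r → ZMod p)) Gp
      (Multiplicative (Fin l → ZMod (p ^ 2))))
    -- the `k`-invariants of `G(p)` are decomposable: the `Ext`-component of the
    -- extension class vanishes, i.e. `G(p)` has exponent dividing `p²`
    (hexp : ∀ g : Gp, g ^ (p ^ 2) = 1)
    -- and the commutator form of `G(p)` is the mod `p` reduction of that of `Γ`
    (hcomm : ∀ (γ δ : Γ) (g h : Gp) (z : Fin r → ℤ),
      EGp.π g = Multiplicative.ofAdd (vecIntReduce l (p ^ 2) (Multiplicative.toAdd (EΓ.π γ))) →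
      EGp.π h = Multiplicative.ofAdd (vecIntReduce l (p ^ 2) (Multiplicative.toAdd (EΓ.π δ))) →
      EΓ.ι (Multiplicative.ofAdd z) = ⁅γ, δ⁆ →
      ⁅g, h⁆ = EGp.ι (Multiplicative.ofAdd (vecIntReduce r p z))) :
    -- conclusions:
    Finite Gp ∧ IsPGroup p Gp ∧
    -- the `pC` condition: every element of order `p` in `G(p)` is central
    (∀ g : Gp, orderOf g = p → g ∈ Subgroup.center Gp) ∧
    -- `G(p)` is a central Frattini extension `1 → (ℤ/p)^{r+l} → G(p) → (ℤ/p)^l → 1`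
    (∃ E' : CentralExtension (Multiplicative (Fin (r + l) → ZMod p)) Gp
        (Multiplicative (Fin l → ZMod p)),
      E'.ι.range = pPowerCommutatorSubgroup p Gp) := by
  have hp : p.Prime := Fact.out
  haveI : NeZero p := ⟨hp.ne_zero⟩
  haveI : NeZero (p^2) := ⟨pow_ne_zero 2 hp.ne_zero⟩
  -- Finiteness of Gp
  have hker_fin : Finite EGp.π.ker := by
    rw [← EGp.range_eq_ker]
    exact Finite.of_surjective _ EGp.ι.rangeRestrict_surjective
  have hGfin : Finite Gp := by
    have e2 : Gp ⧸ EGp.π.ker ≃* Multiplicative (Fin l → ZMod (p^2)) :=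
      QuotientGroup.quotientKerEquivOfSurjective EGp.π EGp.π_surjective
    haveI : Finite (Gp ⧸ EGp.π.ker) := Finite.of_equiv _ e2.symm.toEquiv
    exact Finite.of_equiv _ (Subgroup.groupEquivQuotientProdSubgroup (s := EGp.π.ker)).symm
  -- surjectivity of mod-p² reduction composed with EΓ.π
  have hredW : Function.Surjective (vecIntReduce l (p^2)) := by
    intro v
    refine ⟨fun t => Classical.choose (ZMod.intCast_surjective (v t)), funext fun t => ?_⟩
    exact Classical.choose_spec (ZMod.intCast_surjective (v t))
  have hπcomp : ∀ w : Multiplicative (Fin l → ZMod (p^2)), ∃ γ : Γ,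
      w = Multiplicative.ofAdd (vecIntReduce l (p^2) (Multiplicative.toAdd (EΓ.π γ))) := by
    intro w
    obtain ⟨x, hx⟩ := hredW (Multiplicative.toAdd w)
    obtain ⟨γ, hγ⟩ := EΓ.π_surjective (Multiplicative.ofAdd x)
    refine ⟨γ, ?_⟩
    rw [hγ, toAdd_ofAdd, hx, ofAdd_toAdd]
  -- every commutator of Gp is ι of a reduced vector
  have hcomm_formula : ∀ g h : Gp, ∃ z : Fin r → ℤ,
      ⁅g, h⁆ = EGp.ι (Multiplicative.ofAdd (vecIntReduce r p z)) := by
    intro g h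
    obtain ⟨γ, hγ⟩ := hπcomp (EGp.π g)
    obtain ⟨δ, hδ⟩ := hπcomp (EGp.π h)
    have hmem : ⁅γ, δ⁆ ∈ EΓ.ι.range := by
      rw [EΓ.range_eq_ker, MonoidHom.mem_ker, map_commutatorElement]
      exact commutatorElement_eq_one_iff_mul_comm.mpr (mul_comm _ _)
    obtain ⟨zm, hz⟩ := hmem
    exact ⟨Multiplicative.toAdd zm, hcomm γ δ g h _ hγ hδ (by rw [ofAdd_toAdd]; exact hz)⟩
  have hcomm_central : ∀ g h : Gp, ⁅g, h⁆ ∈ Subgroup.center Gp := by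
    intro g h
    obtain ⟨z, hz⟩ := hcomm_formula g h
    rw [hz]
    exact EGp.range_le_center ⟨_, rfl⟩
  -- exponent p of (ℤ/p)-vector groups
  have hexp_p : ∀ (k : ℕ) (v : Multiplicative (Fin k → ZMod p)), v ^ p = 1 := by
    intro k v
    have h0 : p • Multiplicative.toAdd v = 0 := by
      funext t
      show p • (Multiplicative.toAdd v t) = 0
      rw [nsmul_eq_mul, ZMod.natCast_self, zero_mul]
    rw [← ofAdd_toAdd v, ← ofAdd_nsmul, h0, ofAdd_zero]
  have hcomm_pow : ∀ g h : Gp, ⁅g, h⁆ ^ p = 1 := by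
    intro g h
    obtain ⟨z, hz⟩ := hcomm_formula g h
    rw [hz, ← map_pow, hexp_p, map_one]
  have hppow_central : ∀ g : Gp, g ^ p ∈ Subgroup.center Gp := by
    intro g
    rw [Subgroup.mem_center_iff]
    intro h
    have h1 : ⁅g ^ p, h⁆ = 1 := by
      rw [comm_pow_left_of_central hcomm_central, hcomm_pow]
    exact (commutatorElement_eq_one_iff_mul_comm.mp h1).symm
  -- splitting of elements with p-divisible image
  have hsplit : ∀ g : Gp, (∀ t, p ∣ (Multiplicative.toAdd (EGp.π g) t).val) →
      ∃ (a : Multiplicative (Fin r → ZMod p)) (k : Gp), g = EGp.ι a * k ^ p := by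
    intro g hdvd
    choose y hy using fun t => zmodsq_of_dvd_val (hdvd t)
    obtain ⟨k, hk⟩ := EGp.π_surjective (Multiplicative.ofAdd y)
    have hπk : EGp.π (k ^ p) = EGp.π g := by
      rw [map_pow, hk, ← ofAdd_nsmul, ← ofAdd_toAdd (EGp.π g)]
      congr 1
      funext t
      show p • y t = Multiplicative.toAdd (EGp.π g) t
      rw [nsmul_eq_mul, ← hy t]
    have hmem : g * (k ^ p)⁻¹ ∈ EGp.ι.range := by
      rw [EGp.range_eq_ker, MonoidHom.mem_ker, map_mul, map_inv, hπk, mul_inv_cancel]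
    obtain ⟨a, ha⟩ := hmem
    exact ⟨a, k, by rw [ha, inv_mul_cancel_right]⟩
  -- the pC property
  have hpC : ∀ g : Gp, orderOf g = p → g ∈ Subgroup.center Gp := by
    intro g hg
    have hgp : g ^ p = 1 := by rw [← hg]; exact pow_orderOf_eq_one g
    have hdvd : ∀ t, p ∣ (Multiplicative.toAdd (EGp.π g) t).val := by
      intro t
      apply zmodsq_dvd_of_mul_zero
      have h1 : (EGp.π g) ^ p = 1 := by rw [← map_pow, hgp, map_one]
      have h2 : p • Multiplicative.toAdd (EGp.π g) = 0 := by
        rw [← toAdd_ofAdd (p • Multiplicative.toAdd (EGp.π g)), ofAdd_nsmul, ofAdd_toAdd, h1,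
          toAdd_one]
      have h3 := congrFun h2 t
      rw [Pi.smul_apply, Pi.zero_apply] at h3
      rwa [nsmul_eq_mul] at h3
    obtain ⟨a, k, hak⟩ := hsplit g hdvd
    rw [hak]
    exact Subgroup.mul_mem _ (EGp.range_le_center ⟨a, rfl⟩) (hppow_central k)
  -- ι of any element lands in the commutator subgroup (via irreducibility)
  have hι_comm : ∀ a : Multiplicative (Fin r → ZMod p), EGp.ι a ∈ commutator Gp := by
    -- step 1 : the image of EΓ.ι is contained in the commutator subgroup of Γ
    have hab : ∀ w : Multiplicative (Fin r → ℤ), EΓ.ι w ∈ commutator Γ := by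
      obtain ⟨e⟩ := hirr
      set f : Abelianization Γ →* Multiplicative (Fin l → ℤ) := Abelianization.lift EΓ.π with hf
      have hfof : ∀ x : Γ, f (Abelianization.of x) = EΓ.π x := fun x => rfl
      have hf_surj : Function.Surjective f := by
        intro y
        obtain ⟨x, hx⟩ := EΓ.π_surjective y
        exact ⟨Abelianization.of x, by rw [hfof, hx]⟩
      set F : Multiplicative (Fin l → ℤ) →* Multiplicative (Fin l → ℤ) :=
        f.comp e.symm.toMonoidHom with hF
      have hF_surj : Function.Surjective F := hf_surj.comp e.symm.surjective
      -- F is injective since ℤ^l is Noetherian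
      have hF_inj : Function.Injective F := by
        set A : (Fin l → ℤ) →+ (Fin l → ℤ) :=
          { toFun := fun x => Multiplicative.toAdd (F (Multiplicative.ofAdd x))
            map_zero' := by
              show Multiplicative.toAdd (F 1) = 0
              rw [map_one]
              rfl
            map_add' := fun x y => by
              show Multiplicative.toAdd (F (Multiplicative.ofAdd x * Multiplicative.ofAdd y)) = _
              rw [map_mul]
              rfl } with hA
        have hA_surj : Function.Surjective A.toIntLinearMap := by
          intro y
          obtain ⟨x, hx⟩ := hF_surj (Multiplicative.ofAdd y)
          exact ⟨Multiplicative.toAdd x, by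
            show Multiplicative.toAdd (F x) = y
            rw [hx]
            rfl⟩
        have hA_inj : Function.Injective A.toIntLinearMap :=
          IsNoetherian.injective_of_surjective_endomorphism A.toIntLinearMap hA_surj
        intro x y hxy
        have : A (Multiplicative.toAdd x) = A (Multiplicative.toAdd y) := by
          show Multiplicative.toAdd (F x) = Multiplicative.toAdd (F y)
          rw [hxy]
        exact hA_inj this
      have hf_inj : Function.Injective f := by
        intro x y hxy
        have : F (e x) = F (e y) := by
          show f (e.symm (e x)) = f (e.symm (e y))
          rw [e.symm_apply_apply, e.symm_apply_apply, hxy]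
        have := hF_inj this
        exact e.injective this
      intro w
      have h1 : EΓ.π (EΓ.ι w) = 1 := by
        have : EΓ.ι w ∈ EΓ.π.ker := EΓ.range_eq_ker ▸ ⟨w, rfl⟩
        exact this
      have h2 : Abelianization.of (EΓ.ι w) = 1 := by
        apply hf_inj
        rw [hfof, h1, map_one]
      exact (QuotientGroup.eq_one_iff _).mp h2
    -- step 2 : transfer to Gp by induction over the commutator subgroup
    intro a
    have hredr : ∃ z : Fin r → ℤ, vecIntReduce r p z = Multiplicative.toAdd a := by
      refine ⟨fun t => Classical.choose (ZMod.intCast_surjective (Multiplicative.toAdd a t)),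
        funext fun t => ?_⟩
      exact Classical.choose_spec (ZMod.intCast_surjective (Multiplicative.toAdd a t))
    obtain ⟨z0, hz0⟩ := hredr
    have hmem : EΓ.ι (Multiplicative.ofAdd z0) ∈
        Subgroup.closure (commutatorSet Γ) := by
      rw [← commutator_eq_closure]
      exact hab _
    have key : ∀ (x : Γ), x ∈ Subgroup.closure (commutatorSet Γ) →
        ∃ z : Fin r → ℤ, EΓ.ι (Multiplicative.ofAdd z) = x ∧
          EGp.ι (Multiplicative.ofAdd (vecIntReduce r p z)) ∈ commutator Gp := by
      intro x hx
      induction hx using Subgroup.closure_induction with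
      | mem x hx =>
        obtain ⟨γ, δ, rfl⟩ := hx
        have hmemr : ⁅γ, δ⁆ ∈ EΓ.ι.range := by
          rw [EΓ.range_eq_ker, MonoidHom.mem_ker, map_commutatorElement]
          exact commutatorElement_eq_one_iff_mul_comm.mpr (mul_comm _ _)
        obtain ⟨zm, hzm⟩ := hmemr
        obtain ⟨g, hg⟩ := EGp.π_surjective
          (Multiplicative.ofAdd (vecIntReduce l (p^2) (Multiplicative.toAdd (EΓ.π γ))))
        obtain ⟨h, hh⟩ := EGp.π_surjective
          (Multiplicative.ofAdd (vecIntReduce l (p^2) (Multiplicative.toAdd (EΓ.π δ))))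
        refine ⟨Multiplicative.toAdd zm, hzm, ?_⟩
        have := hcomm γ δ g h (Multiplicative.toAdd zm) hg hh hzm
        rw [← this, commutator_def]
        exact Subgroup.commutator_mem_commutator (Subgroup.mem_top g) (Subgroup.mem_top h)
      | one =>
        refine ⟨0, ?_, ?_⟩
        · rw [show Multiplicative.ofAdd (0 : Fin r → ℤ) = 1 from rfl, map_one]
        · rw [map_zero, show Multiplicative.ofAdd (0 : Fin r → ZMod p) = 1 from rfl, map_one]
          exact Subgroup.one_mem _
      | mul x y hxc hyc hx hy =>
        obtain ⟨z1, hz1, m1⟩ := hx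
        obtain ⟨z2, hz2, m2⟩ := hy
        refine ⟨z1 + z2, ?_, ?_⟩
        · rw [show Multiplicative.ofAdd (z1 + z2)
            = Multiplicative.ofAdd z1 * Multiplicative.ofAdd z2 from rfl, map_mul, hz1, hz2]
        · rw [map_add, show Multiplicative.ofAdd (vecIntReduce r p z1 + vecIntReduce r p z2)
            = Multiplicative.ofAdd (vecIntReduce r p z1)
              * Multiplicative.ofAdd (vecIntReduce r p z2) from rfl, map_mul]
          exact Subgroup.mul_mem _ m1 m2
      | inv x hxc hx =>
        obtain ⟨z1, hz1, m1⟩ := hx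
        refine ⟨-z1, ?_, ?_⟩
        · rw [show Multiplicative.ofAdd (-z1) = (Multiplicative.ofAdd z1)⁻¹ from rfl,
            map_inv, hz1]
        · rw [map_neg, show Multiplicative.ofAdd (-(vecIntReduce r p z1))
            = (Multiplicative.ofAdd (vecIntReduce r p z1))⁻¹ from rfl, map_inv]
          exact Subgroup.inv_mem _ m1
    obtain ⟨z, hz, hm⟩ := key _ hmem
    have hzz : z = z0 := by
      have := EΓ.ι_injective hz
      exact Multiplicative.ofAdd.injective this
    rw [hzz, hz0, ofAdd_toAdd] at hm
    exact hm
  -- the reduced projection π'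
  set π' : Gp →* Multiplicative (Fin l → ZMod p) := (redHom p l).comp EGp.π with hπ'
  have hπ'_surj : Function.Surjective π' :=
    (redHom_surjective p l).comp EGp.π_surjective
  set M : Subgroup Gp := pPowerCommutatorSubgroup p Gp with hM
  have hM_center : M ≤ Subgroup.center Gp := by
    apply sup_le
    · rw [commutator_def]
      exact Subgroup.commutator_le.mpr fun g _ h _ => hcomm_central g h
    · rw [Subgroup.closure_le]
      rintro x ⟨k, rfl⟩
      exact hppow_central k
  have hker_eq : π'.ker = M := by
    apply le_antisymm
    · intro g hg
      have hdvd : ∀ t, p ∣ (Multiplicative.toAdd (EGp.π g) t).val := by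
        intro t
        apply zmodsq_dvd_of_cast_zero
        have h1 : Multiplicative.toAdd (redHom p l (EGp.π g)) t = 0 := by
          have : π' g = 1 := hg
          have h2 : redHom p l (EGp.π g) = 1 := this
          rw [h2, toAdd_one]
          rfl
        rw [← redHom_apply]
        exact h1
      obtain ⟨a, k, hak⟩ := hsplit g hdvd
      rw [hak]
      apply Subgroup.mul_mem
      · exact Subgroup.mem_sup_left (hι_comm a)
      · exact Subgroup.mem_sup_right (Subgroup.subset_closure ⟨k, rfl⟩)
    · apply sup_le
      · rw [commutator_def]
        refine Subgroup.commutator_le.mpr fun g _ h _ => ?_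
        rw [MonoidHom.mem_ker, map_commutatorElement]
        exact commutatorElement_eq_one_iff_mul_comm.mpr (mul_comm _ _)
      · rw [Subgroup.closure_le]
        rintro x ⟨k, rfl⟩
        have : π' (k ^ p) = 1 := by rw [map_pow, hexp_p]
        exact this
  -- M is an elementary abelian p-group of rank r + l
  clear_value M
  haveI : Finite ↥M := inferInstance
  letI : CommGroup ↥M :=
    { (inferInstance : Group ↥M) with
      mul_comm := fun a b => Subtype.ext ((Subgroup.mem_center_iff.mp (hM_center b.2)) a.1) }
  have hM_exp : ∀ x : ↥M, x ^ p = 1 := by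
    intro x
    have hxk : (x : Gp) ∈ π'.ker := hker_eq.symm ▸ x.2
    have hdvd : ∀ t, p ∣ (Multiplicative.toAdd (EGp.π (x : Gp)) t).val := by
      intro t
      apply zmodsq_dvd_of_cast_zero
      have h2 : redHom p l (EGp.π (x : Gp)) = 1 := hxk
      rw [← redHom_apply, h2, toAdd_one]
      rfl
    obtain ⟨a, k, hak⟩ := hsplit _ hdvd
    have hcom : Commute (EGp.ι a) (k ^ p) :=
      (Subgroup.mem_center_iff.mp (EGp.range_le_center ⟨a, rfl⟩) _).symm
    have hxp : (x : Gp) ^ p = 1 := by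
      rw [hak, hcom.mul_pow, ← map_pow, hexp_p, map_one, one_mul, ← pow_mul, ← pow_two]
      exact hexp k
    exact Subtype.ext (by rw [SubmonoidClass.coe_pow, hxp, OneMemClass.coe_one])
  -- cardinality computations
  have cardvec : ∀ (k m : ℕ), Nat.card (Multiplicative (Fin k → ZMod m)) = m ^ k := by
    intro k m
    rw [Nat.card_congr Multiplicative.toAdd, Nat.card_fun, Nat.card_zmod,
      Nat.card_eq_fintype_card, Fintype.card_fin]
  have c1 : Nat.card Gp = p ^ (2 * l) * p ^ r := by
    rw [Subgroup.card_eq_card_quotient_mul_card_subgroup EGp.π.ker]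
    congr 1
    · rw [Nat.card_congr
        (QuotientGroup.quotientKerEquivOfSurjective EGp.π EGp.π_surjective).toEquiv, cardvec]
      exact (pow_mul p 2 l).symm
    · rw [← EGp.range_eq_ker,
        Nat.card_congr (MonoidHom.ofInjective EGp.ι_injective).toEquiv.symm, cardvec]
  have c2 : Nat.card Gp = p ^ l * Nat.card ↥M := by
    rw [Subgroup.card_eq_card_quotient_mul_card_subgroup π'.ker]
    congr 1
    · rw [Nat.card_congr (QuotientGroup.quotientKerEquivOfSurjective π' hπ'_surj).toEquiv, cardvec]
    · rw [hker_eq]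
  have cM : Nat.card ↥M = p ^ (r + l) := by
    have hpl : 0 < p ^ l := pow_pos hp.pos l
    have heq : p ^ l * Nat.card ↥M = p ^ l * p ^ (r + l) := by
      rw [← c2, c1, ← pow_add, ← pow_add]
      congr 1
      omega
    exact Nat.eq_of_mul_eq_mul_left hpl heq
  obtain ⟨E2⟩ : Nonempty (Multiplicative (Fin (r + l) → ZMod p) ≃* ↥M) :=
    elemAbelianEquiv p (r + l) ↥M hM_exp cM
  have hrange : (M.subtype.comp E2.toMonoidHom).range = M := by
    apply le_antisymm
    · rintro x ⟨v, rfl⟩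
      exact (E2 v).2
    · intro x hx
      exact ⟨E2.symm ⟨x, hx⟩, by simp⟩
  refine ⟨hGfin, fun g => ⟨2, hexp g⟩, hpC,
    ⟨{ ι := M.subtype.comp E2.toMonoidHom
       π := π'
       ι_injective := M.subtype_injective.comp E2.injective
       π_surjective := hπ'_surj
       range_eq_ker := hrange.trans hker_eq.symm
       range_le_center := hrange.le.trans hM_center }, hrange⟩⟩
end

section
/- Let p be an odd prime and let G be a pC p-group with the Ω1-extension property, so that H^*(G; F_p) ≅ F_p[ζ_1,…,ζ_n] ⊗ C^* with C^* finite-dimensional, n = rank of Ω1(G), and the ζ_i degree-2 classes restricting to generators of H^2(Ω1(G); F_p)_red. If η_1,…,η_n is any other regular sequence of degree-2 elements of H^*(G; F_p) whose restrictions generate H^2(Ω1(G); F_p)_red, then there is a graded algebra automorphism of H^*(G; F_p) carrying the ideal (ζ_1,…,ζ_n) to (η_1,…,η_n); consequently H^*(G; F_p)/(η_1,…,η_n) ≅ C^* and H^*(G; F_p) ≅ F_p[η_1,…,η_n] ⊗ C^* as graded F_p-algebras. -/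
open scoped TensorProduct

/-!
STATEMENT 8.  Let `G` be a `pC` `p`-group with the `Ω₁`-extension property, with a
Weigel decomposition `H^*(G;𝔽_p) ≅ 𝔽_p[ζ_1,…,ζ_n] ⊗ C^*` (`C^*` finite-dimensional,
`n = rank Ω₁(G)`, the `ζ_i` of degree 2 restricting to generators of
`H²(Ω₁(G);𝔽_p)_red`).  If `η_1,…,η_n` is any other regular sequence of degree-2
elements whose restrictions generate `H²(Ω₁(G);𝔽_p)_red`, then there is a graded
algebra automorphism of `H^*(G;𝔽_p)` carrying the ideal `(ζ_1,…,ζ_n)` to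
`(η_1,…,η_n)`; consequently `H^*(G;𝔽_p)/(η_1,…,η_n) ≅ C^*` and
`H^*(G;𝔽_p) ≅ 𝔽_p[η_1,…,η_n] ⊗ C^*` as graded algebras.
-/

/-- A model of the mod `p` cohomology ring of `G`. -/
def IsModPCohomologyOf (p : ℕ) (G : Type) [Group G]
    (A : Type) [Ring A] [Algebra (ZMod p) A] (𝒜 : ℕ → Submodule (ZMod p) A)
    [GradedAlgebra 𝒜] : Prop :=
  (∀ m n : ℕ, ∀ a ∈ 𝒜 m, ∀ b ∈ 𝒜 n, a * b = ((-1 : ZMod p)) ^ (m * n) • (b * a)) ∧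
  ∀ n : ℕ, Nonempty
    ((𝒜 n) ≃ₗ[ZMod p] (groupCohomology (Rep.trivial (ZMod p) G (ZMod p)) n))

/-- `ζ_1, …, ζ_n` is a regular sequence in `A`. -/
def IsRegularSequence {A : Type} [Ring A] {n : ℕ} (ζ : Fin n → A) : Prop :=
  ∀ i : Fin n, ∀ a : A,
    a * ζ i ∈ Ideal.span (ζ '' {j | j < i}) → a ∈ Ideal.span (ζ '' {j | j < i})

/-- `H^*((ℤ/p)^n;𝔽_p) = Λ(e_1,…,e_n) ⊗ 𝔽_p[b_1,…,b_n]` (for `p` odd). -/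
noncomputable abbrev ElemAbelianCohomology (p n : ℕ) : Type :=
  (ExteriorAlgebra (ZMod p) (Fin n → ZMod p)) ⊗[ZMod p] (MvPolynomial (Fin n) (ZMod p))

/-- The degree `k` part of `Λ(e_1,…,e_n) ⊗ 𝔽_p[b_1,…,b_n]` (`|e_i| = 1`, `|b_i| = 2`). -/
noncomputable def elemAbelianGrade (p n k : ℕ) :
    Submodule (ZMod p) (ElemAbelianCohomology p n) :=
  ⨆ (ab : ℕ × ℕ) (_ : ab.1 + 2 * ab.2 = k),
    LinearMap.range (TensorProduct.map
      (⋀[ZMod p]^ab.1 (Fin n → ZMod p)).subtype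
      (MvPolynomial.homogeneousSubmodule (Fin n) (ZMod p) ab.2).subtype)

/-- The reduced quotient `(Λ(e) ⊗ 𝔽_p[b])_red = 𝔽_p[b_1,…,b_n]`. -/
noncomputable def elemAbelianRed (p n : ℕ) :
    ElemAbelianCohomology p n →ₐ[ZMod p] MvPolynomial (Fin n) (ZMod p) :=
  (Algebra.TensorProduct.lid (ZMod p) (MvPolynomial (Fin n) (ZMod p))).toAlgHom.comp
    (Algebra.TensorProduct.map (ExteriorAlgebra.algebraMapInv) (AlgHom.id _ _))

/-!
Degree-2 classes are central (graded commutativity), and every homogeneous element of positive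
degree in the finite-dimensional algebra `C` is nilpotent, so it dies in the reduced ring
`𝔽_p[b_1,…,b_n]`. Since `H⁰ = 𝔽_p`, the decomposition shows that `H²` is spanned by the `ζ_i`
and `C ∩ H²`, hence `η_i = ∑ a_ij ζ_j + c_i` with `c_i ∈ C ∩ H²`. Reducing, the `ζ_i` go to a basis
of the linear forms and the `η_i` to a spanning family, so the matrix `a` is invertible. The
substitution `ζ_i ↦ η_i` fixing `C` is then an automorphism, with inverse
`ζ_i ↦ ∑ (a⁻¹)_ij (ζ_j - c_j)`; it preserves degrees because `H^*` is spanned by products of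
monomials in the `ζ_i` with homogeneous elements of `C`. Composing the decomposition with it gives
`H^* ≅ 𝔽_p[η] ⊗ C^*`, and `H^*/(η) ≅ C^*` because the kernel of `ε ⊗ id` on `𝔽_p[X] ⊗ C^*` is
generated by the `X_i ⊗ 1`.
-/

section Decomposition

variable {ι R M : Type*} [DecidableEq ι] [Semiring R] [AddCommMonoid M] [Module R M]
  (ℳ : ι → Submodule R M) [DirectSum.Decomposition ℳ]

theorem DirectSum.Decomposition.eq_of_le_of_iSup_eq_top (S : ι → Submodule R M)
    (hle : ∀ i, S i ≤ ℳ i) (htop : ⨆ i, S i = ⊤) (i : ι) : ℳ i = S i := by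
  refine le_antisymm (fun x hx => ?_) (hle i)
  have hdecomp : ∀ y ∈ ⨆ j, S j, (DirectSum.decompose ℳ y i : M) ∈ S i := by
    intro y hy
    induction hy using Submodule.iSup_induction' with
    | mem j y hy =>
      obtain rfl | hji := eq_or_ne j i
      · rwa [DirectSum.decompose_of_mem_same ℳ (hle j hy)]
      · simp [DirectSum.decompose_of_mem_ne ℳ (hle j hy) hji]
    | zero => simp
    | add y z _ _ hy hz => simpa using add_mem hy hz
  simpa [DirectSum.decompose_of_mem_same ℳ hx] using hdecomp x (htop ▸ Submodule.mem_top)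

theorem DirectSum.Decomposition.map_eq_of_map_le {φ : M →ₗ[R] M} (hφ : Function.Surjective φ)
    (hle : ∀ i, (ℳ i).map φ ≤ ℳ i) (i : ι) : (ℳ i).map φ = ℳ i := by
  refine le_antisymm (hle i) (fun x hx => ?_)
  have hdecomp : ∀ y, (DirectSum.decompose ℳ (φ y) i : M) ∈ (ℳ i).map φ := by
    intro y
    induction y using DirectSum.Decomposition.inductionOn ℳ with
    | zero => simp
    | @homogeneous j y =>
      obtain ⟨y, hy⟩ := y
      have hφy := hle j ⟨y, hy, rfl⟩
      obtain rfl | hji := eq_or_ne j i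
      · rw [DirectSum.decompose_of_mem_same ℳ hφy]
        exact ⟨y, hy, rfl⟩
      · simp [DirectSum.decompose_of_mem_ne ℳ hφy hji]
    | add y z hy hz => simpa using add_mem hy hz
  obtain ⟨y, rfl⟩ := hφ x
  simpa [DirectSum.decompose_of_mem_same ℳ hx] using hdecomp y

end Decomposition

theorem mem_center_of_mem_grade_of_even {R A : Type*} [CommRing R] [Ring A] [Algebra R A]
    (𝒜 : ℕ → Submodule R A) [GradedAlgebra 𝒜]
    (hcomm : ∀ m n : ℕ, ∀ a ∈ 𝒜 m, ∀ b ∈ 𝒜 n, a * b = ((-1 : R)) ^ (m * n) • (b * a))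
    {k : ℕ} (hk : Even k) {x : A} (hx : x ∈ 𝒜 k) : x ∈ Subalgebra.center R A := by
  rw [Subalgebra.mem_center_iff]
  intro b
  induction b using DirectSum.Decomposition.inductionOn 𝒜 with
  | zero => simp
  | @homogeneous j b =>
    obtain ⟨b, hb⟩ := b
    rw [hcomm k j x hx b hb, (hk.mul_right j).neg_one_pow, one_smul]
  | add b c hb hc => rw [add_mul, mul_add, hb, hc]

section GradedAlgebraOverField

variable {K A : Type*} [Field K] [Ring A] [Algebra K A] (𝒜 : ℕ → Submodule K A)
  [GradedAlgebra 𝒜]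

theorem grade_zero_eq_one (h : Module.finrank K (𝒜 0) = 1) : 𝒜 0 = 1 := by
  have hone : (⟨1, SetLike.one_mem_graded 𝒜⟩ : 𝒜 0) ≠ 0 := by
    intro h0
    have : Subsingleton A := subsingleton_of_zero_eq_one (congrArg Subtype.val h0).symm
    simp [Module.finrank_zero_of_subsingleton] at h
  refine le_antisymm (fun x hx => ?_) (Submodule.one_le.mpr (SetLike.one_mem_graded 𝒜))
  obtain ⟨c, hc⟩ := (finrank_eq_one_iff_of_nonzero' _ hone).mp h ⟨x, hx⟩
  rw [Submodule.one_eq_span]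
  exact Submodule.mem_span_singleton.mpr ⟨c, congrArg Subtype.val hc⟩

theorem isNilpotent_of_mem_grade (C : Subalgebra K A) [FiniteDimensional K C] {k : ℕ}
    (hk : k ≠ 0) {x : A} (hxC : x ∈ C) (hx : x ∈ 𝒜 k) : IsNilpotent x := by
  by_contra hnil
  have hindep : iSupIndep fun m => 𝒜 (m * k) :=
    (DirectSum.Decomposition.isInternal 𝒜).submodule_iSupIndep.comp (mul_left_injective₀ hk)
  have hli : LinearIndependent K fun m : ℕ => x ^ m :=
    hindep.linearIndependent _ (fun m => by simpa using SetLike.pow_mem_graded m hx)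
      fun m h => hnil ⟨m, h⟩
  exact Module.Finite.not_linearIndependent_of_infinite (R := K)
    (fun m : ℕ => (⟨x ^ m, C.pow_mem hxC m⟩ : C)) (LinearIndependent.of_comp C.val.toLinearMap hli)

end GradedAlgebraOverField

section MvPolynomial

open MvPolynomial

variable {σ R : Type*} [CommRing R]

theorem map_homogeneousSubmodule_le_grade {A : Type*} [Ring A] [Algebra R A]
    (𝒜 : ℕ → Submodule R A) [GradedAlgebra 𝒜] (f : MvPolynomial σ R →ₐ[R] A) {d : ℕ}
    (hf : ∀ i, f (X i) ∈ 𝒜 d) (k : ℕ) :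
    (homogeneousSubmodule σ R k).map f.toLinearMap ≤ 𝒜 (k * d) := by
  induction k with
  | zero =>
    rw [homogeneousSubmodule_zero, Submodule.map_one, Submodule.one_le, zero_mul]
    exact SetLike.one_mem_graded 𝒜
  | succ k ih =>
    rw [← homogeneousSubmodule_one_pow, pow_succ, homogeneousSubmodule_one_pow,
      Submodule.map_mul, homogeneousSubmodule_one_eq_span_X, Submodule.map_span, Submodule.mul_le]
    intro a ha b hb
    have hb : b ∈ 𝒜 d := (Submodule.span_le.mpr (by rintro _ ⟨_, ⟨i, rfl⟩, rfl⟩; exact hf i)) hb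
    simpa [add_mul] using SetLike.mul_mem_graded (ih ha) hb

theorem MvPolynomial.sub_C_constantCoeff_mem_span_X (p : MvPolynomial σ R) :
    p - C (constantCoeff p) ∈ Ideal.span (Set.range (X : σ → MvPolynomial σ R)) := by
  classical
  rw [← Set.image_univ, mem_ideal_span_X_image]
  intro m hm
  obtain ⟨i, hi⟩ : ∃ i, m i ≠ 0 := by
    by_contra! h
    obtain rfl : m = 0 := Finsupp.ext h
    simp [constantCoeff_eq] at hm
  exact ⟨i, trivial, hi⟩

variable (σ R) (B : Type*) [Ring B] [Algebra R B]

noncomputable def MvPolynomial.constantCoeffTensor : MvPolynomial σ R ⊗[R] B →ₐ[R] B :=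
  (Algebra.TensorProduct.lid R B).toAlgHom.comp
    (Algebra.TensorProduct.map (aeval (0 : σ → R)) (AlgHom.id R B))

variable {σ R B}

theorem MvPolynomial.constantCoeffTensor_tmul (p : MvPolynomial σ R) (b : B) :
    constantCoeffTensor σ R B (p ⊗ₜ b) = constantCoeff p • b := by
  simp [constantCoeffTensor, constantCoeff_eq]

theorem MvPolynomial.ker_constantCoeffTensor :
    RingHom.ker (constantCoeffTensor σ R B) =
      Ideal.span (Set.range fun i => X i ⊗ₜ[R] (1 : B)) := by
  set J := Ideal.span (Set.range fun i => (X i : MvPolynomial σ R) ⊗ₜ[R] (1 : B))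
  have hJ : J = (Ideal.span (Set.range X)).map (Algebra.TensorProduct.includeLeft (S := R)) := by
    rw [Ideal.map_span, ← Set.range_comp]
    rfl
  have hmem : ∀ p ∈ Ideal.span (Set.range (X : σ → MvPolynomial σ R)), ∀ b : B,
      p ⊗ₜ[R] b ∈ J := by
    intro p hp b
    rw [show p ⊗ₜ[R] b = (1 ⊗ₜ b) * Algebra.TensorProduct.includeLeft (S := R) p by simp, hJ]
    exact Ideal.mul_mem_left _ _ (Ideal.mem_map_of_mem _ hp)
  have hsub : ∀ t, t - 1 ⊗ₜ constantCoeffTensor σ R B t ∈ J := by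
    intro t
    induction t using TensorProduct.induction_on with
    | zero => simp
    | tmul p b =>
      rw [constantCoeffTensor_tmul, ← TensorProduct.smul_tmul, ← TensorProduct.sub_tmul,
        smul_eq_C_mul, mul_one]
      exact hmem _ (sub_C_constantCoeff_mem_span_X p) b
    | add s t hs ht => simpa [add_sub_add_comm, TensorProduct.tmul_add] using J.add_mem hs ht
  refine le_antisymm (fun t ht => ?_) ?_
  · simpa [RingHom.mem_ker.mp ht] using hsub t
  · rw [Ideal.span_le]
    rintro _ ⟨i, rfl⟩
    simp [RingHom.mem_ker, constantCoeffTensor_tmul]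

end MvPolynomial

section LinearAlgebra

variable {l m n R M : Type*} [Fintype m] [Fintype n] [CommSemiring R] [AddCommMonoid M]
  [Module R M]

theorem Matrix.sum_smul_sum_smul (x : Matrix l m R) (y : Matrix m n R) (v : n → M) (i : l) :
    ∑ j, x i j • ∑ k, y j k • v k = ∑ k, (x * y) i k • v k := by
  simp only [Finset.smul_sum, smul_smul, Matrix.mul_apply, Finset.sum_smul]
  exact Finset.sum_comm

theorem Matrix.sum_one_smul [DecidableEq n] (v : n → M) (i : n) :
    ∑ k, (1 : Matrix n n R) i k • v k = v i := by
  simp [Matrix.one_apply]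

theorem LinearIndependent.of_span_range_eq {K V ι : Type*} [DivisionRing K] [AddCommGroup V]
    [Module K V] [Fintype ι] {f g : ι → V} (hg : LinearIndependent K g)
    (h : Submodule.span K (Set.range f) = Submodule.span K (Set.range g)) :
    LinearIndependent K f := by
  rw [linearIndependent_iff_card_eq_finrank_span, Set.finrank, h, finrank_span_eq_card hg]

theorem exists_isUnit_matrix_of_span_le {K V W ι : Type*} [Field K] [AddCommGroup V]
    [Module K V] [AddCommGroup W] [Module K W] [Fintype ι] [DecidableEq ι] (L : V →ₗ[K] W)
    {ζ η : ι → V} (hη : ∀ i, η i ∈ Submodule.span K (Set.range ζ))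
    (hli : LinearIndependent K (L ∘ ζ))
    (hspan : Submodule.span K (Set.range (L ∘ ζ)) ≤ Submodule.span K (Set.range (L ∘ η))) :
    ∃ a : Matrix ι ι K, IsUnit a ∧ ∀ i, η i = ∑ j, a i j • ζ j := by
  choose a ha using fun i => (Submodule.mem_span_range_iff_exists_fun K).mp (hη i)
  choose b hb using fun i =>
    (Submodule.mem_span_range_iff_exists_fun K).mp (hspan (Submodule.subset_span ⟨i, rfl⟩))
  have hba : Matrix.of b * Matrix.of a = 1 := by
    ext i k
    refine Fintype.linearIndependent_iffₛ.mp hli _ _ ?_ k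
    calc ∑ k, (Matrix.of b * Matrix.of a) i k • L (ζ k)
        = ∑ j, b i j • ∑ k, a j k • L (ζ k) := (Matrix.sum_smul_sum_smul _ _ _ i).symm
      _ = L (ζ i) := by simpa [← ha] using hb i
      _ = ∑ k, (1 : Matrix ι ι K) i k • L (ζ k) :=
        (Matrix.sum_one_smul (fun k => L (ζ k)) i).symm
  exact ⟨Matrix.of a, ⟨⟨_, _, mul_eq_one_comm.mp hba, hba⟩, rfl⟩, fun i => (ha i).symm⟩

end LinearAlgebra

section TensorDecomposition

open MvPolynomial

variable {σ R A : Type*} [CommRing R] [Ring A] [Algebra R A] {C : Subalgebra R A}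
  (e : MvPolynomial σ R ⊗[R] C ≃ₐ[R] A)

theorem tmul_one_mem_center_of_tensorEquiv (p : MvPolynomial σ R) :
    e (p ⊗ₜ 1) ∈ Subalgebra.center R A := by
  have hp : p ⊗ₜ[R] (1 : C) ∈ Subalgebra.center R (MvPolynomial σ R ⊗[R] C) :=
    Algebra.TensorProduct.includeLeft_map_center_le R _ _
      ⟨p, Subalgebra.mem_center_iff.mpr fun q => mul_comm q p, rfl⟩
  rw [Subalgebra.mem_center_iff] at hp ⊢
  intro a
  obtain ⟨t, rfl⟩ := e.surjective a
  rw [← map_mul, ← map_mul, hp t]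

noncomputable def substGenerators (w : σ → Subalgebra.center R A) : A →ₐ[R] A :=
  (Algebra.TensorProduct.lift ((Subalgebra.center R A).val.comp (aeval w)) C.val
    -- without the `show`, the proof term's type is not syntactically `Commute`,
    -- and `Algebra.TensorProduct.lift_tmul` then fails to rewrite
    fun p c => show Commute _ _ from (Subalgebra.mem_center_iff.mp (aeval w p).2 c).symm).comp
      e.symm.toAlgHom

variable {e}

theorem tensorEquiv_tmul (he : ∀ c : C, e (1 ⊗ₜ c) = c) (p : MvPolynomial σ R) (c : C) :
    e (p ⊗ₜ c) = e (p ⊗ₜ 1) * c := by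
  rw [← he, ← map_mul, Algebra.TensorProduct.tmul_mul_tmul, mul_one, one_mul]

theorem algHom_ext_of_tensorEquiv (he : ∀ c : C, e (1 ⊗ₜ c) = c) {B : Type*} [Semiring B]
    [Algebra R B] {φ ψ : A →ₐ[R] B} (hX : ∀ i, φ (e (X i ⊗ₜ 1)) = ψ (e (X i ⊗ₜ 1)))
    (hC : ∀ c : C, φ c = ψ c) : φ = ψ := by
  have h : φ.comp e.toAlgHom = ψ.comp e.toAlgHom :=
    Algebra.TensorProduct.ext (MvPolynomial.algHom_ext hX)
      (AlgHom.ext fun c => by simpa [he] using hC c)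
  ext a
  obtain ⟨t, rfl⟩ := e.surjective a
  exact DFunLike.congr_fun h t

theorem substGenerators_X (w : σ → Subalgebra.center R A) (i : σ) :
    substGenerators e w (e (X i ⊗ₜ 1)) = w i := by
  simp only [substGenerators, AlgHom.comp_apply, AlgEquiv.toAlgHom_apply,
    AlgEquiv.symm_apply_apply]
  rw [Algebra.TensorProduct.lift_tmul]
  simp

theorem substGenerators_coe (he : ∀ c : C, e (1 ⊗ₜ c) = c) (w : σ → Subalgebra.center R A)
    (c : C) : substGenerators e w c = c := by
  conv_lhs => rw [← he]
  simp only [substGenerators, AlgHom.comp_apply, AlgEquiv.toAlgHom_apply,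
    AlgEquiv.symm_apply_apply]
  rw [Algebra.TensorProduct.lift_tmul]
  simp

theorem exists_algEquiv_tensorEquiv_X_eq [Fintype σ] [DecidableEq σ]
    (he : ∀ c : C, e (1 ⊗ₜ c) = c) (a : Matrix σ σ R) (ha : IsUnit a) (c : σ → C)
    (hc : ∀ i, (c i : A) ∈ Subalgebra.center R A) :
    ∃ Ψ : A ≃ₐ[R] A,
      (∀ i, Ψ (e (X i ⊗ₜ 1)) = ∑ j, a i j • e (X j ⊗ₜ 1) + c i) ∧ ∀ x : C, Ψ x = x := by
  obtain ⟨⟨a, b, hab, hba⟩, rfl⟩ := ha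
  set ζ : σ → A := fun i => e (X i ⊗ₜ 1)
  have hζ : ∀ i, ζ i ∈ Subalgebra.center R A := fun i => tmul_one_mem_center_of_tensorEquiv e _
  set Ψ := substGenerators e fun i =>
    ⟨∑ j, a i j • ζ j + c i, add_mem (sum_mem fun j _ => Subalgebra.smul_mem _ (hζ j) _) (hc i)⟩
  set Ψ' := substGenerators e fun i =>
    ⟨∑ j, b i j • (ζ j - c j),
      sum_mem fun j _ => Subalgebra.smul_mem _ (sub_mem (hζ j) (hc j)) _⟩
  have hΨζ : ∀ i, Ψ (ζ i) = ∑ j, a i j • ζ j + c i := substGenerators_X _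
  have hΨ'ζ : ∀ i, Ψ' (ζ i) = ∑ j, b i j • (ζ j - c j) := substGenerators_X _
  have hΨc : ∀ x : C, Ψ x = x := substGenerators_coe he _
  have hΨ'c : ∀ x : C, Ψ' x = x := substGenerators_coe he _
  have hΨΨ' : Ψ.comp Ψ' = AlgHom.id R A := by
    refine algHom_ext_of_tensorEquiv he (fun i => ?_) fun x => by simp [hΨc, hΨ'c]
    calc Ψ (Ψ' (ζ i)) = ∑ j, b i j • ∑ k, a j k • ζ k := by simp [hΨ'ζ, hΨζ, hΨc]
      _ = ζ i := by rw [Matrix.sum_smul_sum_smul, hba, Matrix.sum_one_smul]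
  have hΨ'Ψ : Ψ'.comp Ψ = AlgHom.id R A := by
    refine algHom_ext_of_tensorEquiv he (fun i => ?_) fun x => by simp [hΨc, hΨ'c]
    calc Ψ' (Ψ (ζ i)) = ∑ j, a i j • ∑ k, b j k • (ζ k - c k) + c i := by
          simp [hΨ'ζ, hΨζ, hΨ'c]
      _ = ζ i := by rw [Matrix.sum_smul_sum_smul, hab, Matrix.sum_one_smul, sub_add_cancel]
  exact ⟨AlgEquiv.ofAlgHom Ψ Ψ' hΨΨ' hΨ'Ψ, hΨζ, hΨc⟩

variable (𝒜 : ℕ → Submodule R A) [GradedAlgebra 𝒜]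

theorem grade_eq_iSup_map_mul (he : ∀ c : C, e (1 ⊗ₜ c) = c)
    (hCgr : C.toSubmodule = ⨆ k, C.toSubmodule ⊓ 𝒜 k) {d : ℕ} (hX : ∀ i, e (X i ⊗ₜ 1) ∈ 𝒜 d)
    (k : ℕ) :
    𝒜 k = ⨆ (ij : ℕ × ℕ) (_ : ij.1 * d + ij.2 = k),
      (homogeneousSubmodule σ R ij.1).map
        (e.toAlgHom.comp Algebra.TensorProduct.includeLeft).toLinearMap *
      (C.toSubmodule ⊓ 𝒜 ij.2) := by
  apply DirectSum.Decomposition.eq_of_le_of_iSup_eq_top 𝒜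
  · intro k
    refine iSup₂_le ?_
    rintro ⟨i, j⟩ rfl
    exact Submodule.mul_le.mpr fun x hx y hy =>
      SetLike.mul_mem_graded (map_homogeneousSubmodule_le_grade 𝒜 _ hX i hx) hy.2
  rw [eq_top_iff]
  rintro a -
  obtain ⟨t, rfl⟩ := e.surjective a
  induction t using TensorProduct.induction_on with
  | zero => simp
  | add s t hs ht => simpa using add_mem hs ht
  | tmul p c =>
    have hp : e (p ⊗ₜ 1) ∈ ⨆ i, (homogeneousSubmodule σ R i).map
        (e.toAlgHom.comp Algebra.TensorProduct.includeLeft).toLinearMap := by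
      rw [← Submodule.map_iSup, ← sum_homogeneousComponent p]
      exact Submodule.mem_map_of_mem (sum_mem fun i _ =>
        Submodule.mem_iSup_of_mem i (homogeneousComponent_isHomogeneous i p))
    have hc : (c : A) ∈ ⨆ j, C.toSubmodule ⊓ 𝒜 j := hCgr ▸ c.2
    have hpc := Submodule.mul_mem_mul hp hc
    simp only [Submodule.iSup_mul, Submodule.mul_iSup] at hpc
    rw [tensorEquiv_tmul he]
    refine SetLike.le_def.mp ?_ hpc
    exact iSup₂_le fun j i => le_iSup_of_le (i * d + j) (le_iSup₂_of_le (i, j) rfl le_rfl)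

theorem grade_le_span_sup (he : ∀ c : C, e (1 ⊗ₜ c) = c)
    (hCgr : C.toSubmodule = ⨆ k, C.toSubmodule ⊓ 𝒜 k) (h𝒜0 : 𝒜 0 = 1) {d : ℕ} (hd : d ≠ 0)
    (hX : ∀ i, e (X i ⊗ₜ 1) ∈ 𝒜 d) :
    𝒜 d ≤ Submodule.span R (Set.range fun i => e (X i ⊗ₜ 1)) ⊔ (C.toSubmodule ⊓ 𝒜 d) := by
  refine (grade_eq_iSup_map_mul 𝒜 he hCgr hX d).le.trans (iSup₂_le ?_)
  rintro ⟨i, j⟩ (hij : i * d + j = d)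
  rcases i with _ | _ | i
  · obtain rfl : j = d := by simpa using hij
    rw [homogeneousSubmodule_zero, Submodule.map_one, one_mul]
    exact le_sup_right
  · obtain rfl : j = 0 := by simpa using hij
    refine (mul_le_mul' le_rfl (inf_le_right.trans h𝒜0.le)).trans ?_
    rw [mul_one, homogeneousSubmodule_one_eq_span_X, Submodule.map_span, ← Set.range_comp]
    exact le_sup_left
  · have : (i + 1 + 1) * d = i * d + 2 * d := by ring
    omega

theorem map_grade_le_of_tensorEquiv (he : ∀ c : C, e (1 ⊗ₜ c) = c)
    (hCgr : C.toSubmodule = ⨆ k, C.toSubmodule ⊓ 𝒜 k) {d : ℕ} (hX : ∀ i, e (X i ⊗ₜ 1) ∈ 𝒜 d)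
    {Ψ : A →ₐ[R] A} (hΨX : ∀ i, Ψ (e (X i ⊗ₜ 1)) ∈ 𝒜 d) (hΨC : ∀ c : C, Ψ c = c) (k : ℕ) :
    (𝒜 k).map Ψ.toLinearMap ≤ 𝒜 k := by
  refine (Submodule.map_mono (grade_eq_iSup_map_mul 𝒜 he hCgr hX k).le).trans ?_
  simp only [Submodule.map_iSup, Submodule.map_mul, ← Submodule.map_comp,
    ← AlgHom.comp_toLinearMap]
  refine iSup₂_le fun ij hij => Submodule.mul_le.mpr ?_
  rintro _ hx _ ⟨y, hy, rfl⟩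
  rw [← hij]
  refine SetLike.mul_mem_graded (map_homogeneousSubmodule_le_grade 𝒜 _ hΨX ij.1 hx) ?_
  simpa [hΨC ⟨y, hy.1⟩] using hy.2

end TensorDecomposition

theorem exists_isUnit_matrix_of_reduction_span_le {σ K A B : Type*} [Fintype σ] [DecidableEq σ]
    [Field K] [Ring A] [Algebra K A] [Ring B] [IsReduced B] [Algebra K B]
    (𝒜 : ℕ → Submodule K A) [GradedAlgebra 𝒜] {C : Subalgebra K A} [FiniteDimensional K C]
    {e : MvPolynomial σ K ⊗[K] C ≃ₐ[K] A} (he : ∀ c : C, e (1 ⊗ₜ c) = c)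
    (hCgr : C.toSubmodule = ⨆ k, C.toSubmodule ⊓ 𝒜 k) (h𝒜0 : 𝒜 0 = 1) {d : ℕ} (hd : d ≠ 0)
    (hX : ∀ i, e (MvPolynomial.X i ⊗ₜ 1) ∈ 𝒜 d) (L : A →ₐ[K] B)
    (hLX : LinearIndependent K fun i => L (e (MvPolynomial.X i ⊗ₜ 1)))
    {η : σ → A} (hη : ∀ i, η i ∈ 𝒜 d)
    (hspan : Submodule.span K (Set.range fun i => L (e (MvPolynomial.X i ⊗ₜ 1))) ≤
      Submodule.span K (Set.range fun i => L (η i))) :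
    ∃ a : Matrix σ σ K, IsUnit a ∧ ∃ c : σ → C, (∀ i, (c i : A) ∈ 𝒜 d) ∧
      ∀ i, η i = ∑ j, a i j • e (MvPolynomial.X j ⊗ₜ 1) + c i := by
  choose s hs c hc hsc using fun i =>
    Submodule.mem_sup.mp (grade_le_span_sup 𝒜 he hCgr h𝒜0 hd hX (hη i))
  have hLs : (fun i => L (s i)) = fun i => L (η i) := funext fun i => by
    rw [← hsc i, map_add,
      ((isNilpotent_of_mem_grade 𝒜 C hd (hc i).1 (hc i).2).map L).eq_zero, add_zero]
  obtain ⟨a, ha, hsa⟩ := exists_isUnit_matrix_of_span_le L.toLinearMap hs hLX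
    (hspan.trans_eq (congrArg (fun v => Submodule.span K (Set.range v)) hLs.symm))
  exact ⟨a, ha, fun i => ⟨c i, (hc i).1⟩, fun i => (hc i).2, fun i => by rw [← hsa, hsc]⟩

theorem nonempty_quotient_span_X_linearEquiv {σ R A B : Type*} [CommRing R] [Ring A]
    [Algebra R A] [Ring B] [Algebra R B] (e : MvPolynomial σ R ⊗[R] B ≃ₐ[R] A) :
    Nonempty ((A ⧸ (Ideal.span (Set.range fun i => e (MvPolynomial.X i ⊗ₜ 1))).restrictScalars R)
      ≃ₗ[R] B) := by
  set q := (MvPolynomial.constantCoeffTensor σ R B).comp e.symm.toAlgHom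
  have hsurj : Function.Surjective q := fun b =>
    ⟨e (1 ⊗ₜ b), by simp [q, MvPolynomial.constantCoeffTensor_tmul]⟩
  have hspan : Ideal.span (Set.range fun i => e (MvPolynomial.X i ⊗ₜ 1)) =
      (Ideal.span (Set.range fun i => MvPolynomial.X i ⊗ₜ[R] (1 : B))).map e := by
    rw [Ideal.map_span, ← Set.range_comp]
    rfl
  have hker : (Ideal.span (Set.range fun i => e (MvPolynomial.X i ⊗ₜ 1))).restrictScalars R =
      LinearMap.ker q.toLinearMap := by
    ext x
    rw [Submodule.restrictScalars_mem, LinearMap.mem_ker, AlgHom.toLinearMap_apply, hspan,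
      Ideal.mem_map_of_equiv, ← MvPolynomial.ker_constantCoeffTensor]
    constructor
    · rintro ⟨y, hy, rfl⟩
      simpa [q] using hy
    · exact fun hx => ⟨e.symm x, hx, e.apply_symm_apply x⟩
  exact ⟨(Submodule.quotEquivOfEq _ _ hker).trans (q.toLinearMap.quotKerEquivOfSurjective hsurj)⟩

theorem AlgEquiv.map_restrictScalars_ideal_span {R A B : Type*} [CommSemiring R] [Ring A]
    [Algebra R A] [Ring B] [Algebra R B] (Ψ : A ≃ₐ[R] B) (s : Set A) :
    ((Ideal.span s).restrictScalars R).map Ψ.toLinearMap =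
      (Ideal.span (Ψ '' s)).restrictScalars R := by
  rw [← Ideal.map_span]
  ext y
  simp only [Submodule.mem_map, Submodule.restrictScalars_mem, AlgEquiv.toLinearMap_apply,
    Ideal.mem_map_of_equiv]

theorem weigel_decomposition_change_of_regular_sequence_general
    (p n : ℕ) [Fact p.Prime]
    (G : Type) [Group G]
    (A : Type) [Ring A] [Algebra (ZMod p) A]
    (𝒜 : ℕ → Submodule (ZMod p) A) [GradedAlgebra 𝒜]
    (hA : IsModPCohomologyOf p G A 𝒜)
    (res : A →ₐ[ZMod p] ElemAbelianCohomology p n)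
    -- the given Weigel decomposition `H^*(G;𝔽_p) = 𝔽_p[ζ_1,…,ζ_n] ⊗ C^*`
    (C : Subalgebra (ZMod p) A) (hC : FiniteDimensional (ZMod p) C)
    (hCgr : C.toSubmodule = ⨆ k : ℕ, C.toSubmodule ⊓ 𝒜 k)
    (e : (MvPolynomial (Fin n) (ZMod p)) ⊗[ZMod p] C ≃ₐ[ZMod p] A)
    (he : ∀ c : C, e ((1 : MvPolynomial (Fin n) (ZMod p)) ⊗ₜ[ZMod p] c) = ↑c)
    (ζ : Fin n → A) (hζ : ∀ i, ζ i = e ((MvPolynomial.X i) ⊗ₜ[ZMod p] (1 : C)))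
    (hζdeg : ∀ i, ζ i ∈ 𝒜 2)
    (hζres : Submodule.span (ZMod p) (Set.range fun i => elemAbelianRed p n (res (ζ i)))
      = MvPolynomial.homogeneousSubmodule (Fin n) (ZMod p) 1)
    -- another regular sequence of degree-2 elements whose restrictions generate
    -- `H²(Ω₁(G);𝔽_p)_red`
    (η : Fin n → A) (hηdeg : ∀ i, η i ∈ 𝒜 2)
    (hηres : Submodule.span (ZMod p) (Set.range fun i => elemAbelianRed p n (res (η i)))
      = MvPolynomial.homogeneousSubmodule (Fin n) (ZMod p) 1) :
    -- conclusion: a graded algebra automorphism carrying `(ζ)` to `(η)` …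
    (∃ Ψ : A ≃ₐ[ZMod p] A,
      (∀ k : ℕ, Submodule.map Ψ.toLinearMap (𝒜 k) = 𝒜 k) ∧
      Submodule.map Ψ.toLinearMap
          (Submodule.restrictScalars (ZMod p) (Ideal.span (Set.range ζ)))
        = Submodule.restrictScalars (ZMod p) (Ideal.span (Set.range η))) ∧
    -- … consequently `H^*(G;𝔽_p)/(η_1,…,η_n) ≅ C^*` …
    Nonempty ((A ⧸ Submodule.restrictScalars (ZMod p) (Ideal.span (Set.range η)))
      ≃ₗ[ZMod p] C) ∧
    -- … and `H^*(G;𝔽_p) ≅ 𝔽_p[η_1,…,η_n] ⊗ C^*`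
    (∃ e' : (MvPolynomial (Fin n) (ZMod p)) ⊗[ZMod p] C ≃ₐ[ZMod p] A,
      (∀ c : C, e' ((1 : MvPolynomial (Fin n) (ZMod p)) ⊗ₜ[ZMod p] c) = ↑c) ∧
      (∀ i : Fin n, e' ((MvPolynomial.X i) ⊗ₜ[ZMod p] (1 : C)) = η i)) := by
  obtain ⟨hcomm, hdim⟩ := hA
  obtain rfl : ζ = fun i => e (MvPolynomial.X i ⊗ₜ 1) := funext hζ
  have h𝒜0 : 𝒜 0 = 1 := by
    obtain ⟨φ⟩ := hdim 0
    refine grade_zero_eq_one 𝒜 ?_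
    rw [φ.finrank_eq, (groupCohomology.H0IsoOfIsTrivial _).toLinearEquiv.finrank_eq]
    simp
  obtain ⟨a, ha, c, hc, hηa⟩ := exists_isUnit_matrix_of_reduction_span_le 𝒜 he hCgr h𝒜0
    two_ne_zero hζdeg ((elemAbelianRed p n).comp res)
    ((MvPolynomial.linearIndependent_X _ _).of_span_range_eq
      (hζres.trans MvPolynomial.homogeneousSubmodule_one_eq_span_X))
    hηdeg (hζres.trans hηres.symm).le
  obtain ⟨Ψ, hΨζ, hΨC⟩ := exists_algEquiv_tensorEquiv_X_eq he a ha c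
    fun i => mem_center_of_mem_grade_of_even 𝒜 hcomm even_two (hc i)
  have hΨη : ∀ i, Ψ (e (MvPolynomial.X i ⊗ₜ 1)) = η i := fun i => (hΨζ i).trans (hηa i).symm
  have hΨgr : ∀ k, (𝒜 k).map Ψ.toLinearMap = 𝒜 k :=
    DirectSum.Decomposition.map_eq_of_map_le 𝒜 Ψ.surjective
      (map_grade_le_of_tensorEquiv 𝒜 he hCgr hζdeg (Ψ := Ψ.toAlgHom)
        (fun i => hΨη i ▸ hηdeg i) hΨC)
  have hη : (fun i => (e.trans Ψ) (MvPolynomial.X i ⊗ₜ 1)) = η := funext hΨη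
  refine ⟨⟨Ψ, hΨgr, ?_⟩, hη ▸ nonempty_quotient_span_X_linearEquiv (e.trans Ψ),
    e.trans Ψ, fun c => by simp [he, hΨC], hΨη⟩
  rw [AlgEquiv.map_restrictScalars_ideal_span, ← Set.range_comp]
  exact congrArg (fun s => (Ideal.span (Set.range s)).restrictScalars (ZMod p)) hη

theorem weigel_decomposition_change_of_regular_sequence
    (p n : ℕ) [Fact p.Prime] (hodd : Odd p)
    (G : Type) [Group G] [Finite G] (hG : IsPGroup p G)
    (hpC : ∀ g : G, orderOf g = p → g ∈ Subgroup.center G)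
    (Ω₁ : Subgroup G) (hΩ : ∀ g : G, g ∈ Ω₁ ↔ g ^ p = 1)
    (hrank : Nonempty (Ω₁ ≃* Multiplicative (Fin n → ZMod p)))
    (A : Type) [Ring A] [Algebra (ZMod p) A]
    (𝒜 : ℕ → Submodule (ZMod p) A) [GradedAlgebra 𝒜]
    (hA : IsModPCohomologyOf p G A 𝒜)
    (res : A →ₐ[ZMod p] ElemAbelianCohomology p n)
    (hres : ∀ k : ℕ, ∀ a ∈ 𝒜 k, res a ∈ elemAbelianGrade p n k)
    -- the given Weigel decomposition `H^*(G;𝔽_p) = 𝔽_p[ζ_1,…,ζ_n] ⊗ C^*`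
    (C : Subalgebra (ZMod p) A) (hC : FiniteDimensional (ZMod p) C)
    (hCgr : C.toSubmodule = ⨆ k : ℕ, C.toSubmodule ⊓ 𝒜 k)
    (e : (MvPolynomial (Fin n) (ZMod p)) ⊗[ZMod p] C ≃ₐ[ZMod p] A)
    (he : ∀ c : C, e ((1 : MvPolynomial (Fin n) (ZMod p)) ⊗ₜ[ZMod p] c) = ↑c)
    (ζ : Fin n → A) (hζ : ∀ i, ζ i = e ((MvPolynomial.X i) ⊗ₜ[ZMod p] (1 : C)))
    (hζdeg : ∀ i, ζ i ∈ 𝒜 2)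
    (hζres : Submodule.span (ZMod p) (Set.range fun i => elemAbelianRed p n (res (ζ i)))
      = MvPolynomial.homogeneousSubmodule (Fin n) (ZMod p) 1)
    -- another regular sequence of degree-2 elements whose restrictions generate
    -- `H²(Ω₁(G);𝔽_p)_red`
    (η : Fin n → A) (hηdeg : ∀ i, η i ∈ 𝒜 2) (hηreg : IsRegularSequence η)
    (hηres : Submodule.span (ZMod p) (Set.range fun i => elemAbelianRed p n (res (η i)))
      = MvPolynomial.homogeneousSubmodule (Fin n) (ZMod p) 1) :
    -- conclusion: a graded algebra automorphism carrying `(ζ)` to `(η)` …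
    (∃ Ψ : A ≃ₐ[ZMod p] A,
      (∀ k : ℕ, Submodule.map Ψ.toLinearMap (𝒜 k) = 𝒜 k) ∧
      Submodule.map Ψ.toLinearMap
          (Submodule.restrictScalars (ZMod p) (Ideal.span (Set.range ζ)))
        = Submodule.restrictScalars (ZMod p) (Ideal.span (Set.range η))) ∧
    -- … consequently `H^*(G;𝔽_p)/(η_1,…,η_n) ≅ C^*` …
    Nonempty ((A ⧸ Submodule.restrictScalars (ZMod p) (Ideal.span (Set.range η)))
      ≃ₗ[ZMod p] C) ∧
    -- … and `H^*(G;𝔽_p) ≅ 𝔽_p[η_1,…,η_n] ⊗ C^*`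
    (∃ e' : (MvPolynomial (Fin n) (ZMod p)) ⊗[ZMod p] C ≃ₐ[ZMod p] A,
      (∀ c : C, e' ((1 : MvPolynomial (Fin n) (ZMod p)) ⊗ₜ[ZMod p] c) = ↑c) ∧
      (∀ i : Fin n, e' ((MvPolynomial.X i) ⊗ₜ[ZMod p] (1 : C)) = η i)) :=
  weigel_decomposition_change_of_regular_sequence_general p n G A 𝒜 hA res C hC hCgr e he ζ hζ hζdeg
    hζres η hηdeg hηres
end

section
/- Let p be an odd prime and let L be a finite-dimensional Lie algebra over F_p. Let K be a free Z/p²-module of rank equal to dim L, with π: K → L the canonical surjection and i: L → K the injection satisfying i ∘ π = multiplication by p on K. Then the operation x · y = x + y + i([π(x), π(y)]) makes K into a group; this group is a finite p-group of exponent dividing p² in which every element of order p is central (the pC condition), and it fits into a central Frattini extension 1 → V → K → W → 1 in which V and W are elementary abelian p-groups each of rank dim L. -/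
/-- In `ZMod (p^2)`, an element killed by `p` is a multiple of `p`. -/
lemma zmod_sq_exists_of_p_mul_eq_zero (p : ℕ) [Fact p.Prime] (a : ZMod (p ^ 2))
    (h : (p : ZMod (p ^ 2)) * a = 0) : ∃ b : ZMod (p ^ 2), a = (p : ZMod (p ^ 2)) * b := by
  have hp : p.Prime := Fact.out
  have hinst : NeZero (p ^ 2) := ⟨pow_ne_zero 2 hp.ne_zero⟩
  have ha : ((a.val : ℕ) : ZMod (p ^ 2)) = a := by
    simp [ZMod.natCast_val, ZMod.cast_id]
  have h2 : ((p * a.val : ℕ) : ZMod (p ^ 2)) = 0 := by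
    push_cast
    rw [ha]; exact h
  rw [ZMod.natCast_eq_zero_iff] at h2
  obtain ⟨c, hc⟩ := h2
  have hdvd : p ∣ a.val := by
    refine ⟨c, ?_⟩
    have : p * a.val = p * (p * c) := by rw [hc]; ring
    exact Nat.eq_of_mul_eq_mul_left hp.pos this
  obtain ⟨m, hm⟩ := hdvd
  refine ⟨(m : ZMod (p ^ 2)), ?_⟩
  rw [← ha, hm]
  push_cast
  ring


/-!
STATEMENT 17.  Let `p` be an odd prime and `L` a finite-dimensional Lie algebra over
`𝔽_p`.  Let `K` be a free `ℤ/p²`-module of rank `dim L`, with `π : K → L` the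
canonical surjection and `i : L → K` the injection satisfying `i ∘ π = p·(-)` on `K`.
Then `x · y = x + y + i[π x, π y]` makes `K` into a group: a finite `p`-group of
exponent dividing `p²` in which every element of order `p` is central (the `pC`
condition), fitting into a central Frattini extension `1 → V → K → W → 1` with `V`
and `W` elementary abelian of rank `dim L`.  (Here `V = i(L) = ker π` — central, with
the group operation restricting to addition — and `W = K/V ≅ L` via `π`, which is a
surjective homomorphism for the group structure; the Frattini condition is that
`V` consists of `p`-th powers.)
-/

/-- The group operation `x · y = x + y + i[π x, π y]` of the exponent-`p²`
construction. -/
def mulOp {K L : Type} [AddCommGroup K] [LieRing L]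
    (π : K →+ L) (i : L →+ K) (x y : K) : K :=
  x + y + i ⁅π x, π y⁆

/-- Iterated powers `x^[k]` for the operation `mulOp`. -/
def opPow {K L : Type} [AddCommGroup K] [LieRing L]
    (π : K →+ L) (i : L →+ K) : ℕ → K → K
  | 0, _ => 0
  | k + 1, x => mulOp π i x (opPow π i k x)

theorem group_from_Lie_algebra_is_pC_Frattini
    (p : ℕ) [Fact p.Prime] (hodd : Odd p)
    (L : Type) [LieRing L] [LieAlgebra (ZMod p) L] [Module.Finite (ZMod p) L]
    -- `K`: a free `ℤ/p²`-module of rank `dim L`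
    (K : Type) [AddCommGroup K] [Module (ZMod (p ^ 2)) K]
    (bK : Module.Basis (Fin (Module.finrank (ZMod p) L)) (ZMod (p ^ 2)) K)
    -- the canonical surjection `π` and injection `i` with `i ∘ π = p·(-)`
    (π : K →+ L) (i : L →+ K)
    (hπ : Function.Surjective π) (hi : Function.Injective i)
    (hip : ∀ x : K, i (π x) = p • x) :
    -- `x · y = x + y + i[π x, π y]` makes `K` a group:
    (∀ x y z : K, mulOp π i (mulOp π i x y) z = mulOp π i x (mulOp π i y z)) ∧
    (∀ x : K, mulOp π i 0 x = x ∧ mulOp π i x 0 = x) ∧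
    (∀ x : K, ∃ y : K, mulOp π i x y = 0 ∧ mulOp π i y x = 0) ∧
    -- this group is a finite `p`-group of exponent dividing `p²` …
    Finite K ∧
    (∀ x : K, opPow π i (p ^ 2) x = 0) ∧
    -- … satisfying the `pC` condition: every element of order `p` is central
    (∀ x : K, opPow π i p x = 0 → ∀ y : K, mulOp π i x y = mulOp π i y x) ∧
    -- and it fits into a central Frattini extension `1 → V → K → W → 1` with
    -- `V = i(L) = ker π` and `W = K/V ≅ L` elementary abelian of rank `dim L`:
    -- `π` is a surjective homomorphism of the group structure, with kernel `i(L)`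
    (∀ x y : K, π (mulOp π i x y) = π x + π y) ∧
    (Set.range i = {x : K | π x = 0}) ∧
    -- `V = i(L)` is central and the group operation restricts to addition on it
    (∀ l : L, ∀ y : K, mulOp π i (i l) y = mulOp π i y (i l)) ∧
    (∀ l l' : L, mulOp π i (i l) (i l') = i (l + l')) ∧
    (∀ l : L, opPow π i p (i l) = 0) ∧
    -- the extension is Frattini: `V` consists of `p`-th powers (hence lies in the
    -- Frattini subgroup, so `H_1(K;ℤ/p) ≅ W`)
    (∀ l : L, ∃ x : K, opPow π i p x = i l) := by
  have hp : p.Prime := Fact.out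
  -- `p • - = 0` on `L`
  have hpL : ∀ l : L, (p : ℕ) • l = 0 := by
    intro l
    rw [← Nat.cast_smul_eq_nsmul (ZMod p)]
    simp
  -- `π ∘ i = 0`
  have hπi : ∀ l : L, π (i l) = 0 := by
    intro l
    obtain ⟨x, rfl⟩ := hπ l
    rw [hip, map_nsmul, hpL]
  -- `p • i l = 0`
  have hpi : ∀ l : L, (p : ℕ) • i l = 0 := by
    intro l
    rw [← hip (i l), hπi, map_zero]
  -- `π` is a homomorphism
  have hπmul : ∀ x y : K, π (mulOp π i x y) = π x + π y := by
    intro x y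
    simp [mulOp, hπi]
  -- powers are just natural multiples
  have hopPow : ∀ (k : ℕ) (x : K), opPow π i k x = k • x := by
    intro k x
    induction k with
    | zero => simp [opPow]
    | succ n ih =>
      simp only [opPow, mulOp, ih, map_nsmul, lie_nsmul, lie_self, smul_zero, map_zero,
        add_zero, succ_nsmul]
      abel
  -- `p^2 • - = 0` on `K`
  have hp2K : ∀ x : K, (p ^ 2 : ℕ) • x = 0 := by
    intro x
    rw [← Nat.cast_smul_eq_nsmul (ZMod (p ^ 2))]
    simp
  -- kernel of `π` equals range of `i`
  have hker : ∀ x : K, π x = 0 → ∃ l : L, i l = x := by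
    intro x hx
    have hpx : (p : ℕ) • x = 0 := by rw [← hip, hx, map_zero]
    set n := Module.finrank (ZMod p) L with hn
    have hrep : ∀ j : Fin n, (p : ZMod (p ^ 2)) * bK.repr x j = 0 := by
      intro j
      have h1 : bK.repr ((p : ℕ) • x) j = 0 := by rw [hpx]; simp
      rw [map_nsmul] at h1
      simpa [nsmul_eq_mul] using h1
    choose b hb using fun j => zmod_sq_exists_of_p_mul_eq_zero p _ (hrep j)
    refine ⟨π (∑ j, b j • bK j), ?_⟩
    rw [hip]
    calc (p : ℕ) • ∑ j, b j • bK j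
        = ∑ j, ((p : ZMod (p ^ 2)) * b j) • bK j := by
          rw [Finset.smul_sum]
          refine Finset.sum_congr rfl fun j _ => ?_
          rw [← Nat.cast_smul_eq_nsmul (ZMod (p ^ 2)), smul_smul]
      _ = ∑ j, bK.repr x j • bK j := by
          refine Finset.sum_congr rfl fun j _ => ?_
          rw [← hb j]
      _ = x := bK.sum_repr x
  refine ⟨?_, ?_, ?_, ?_, ?_, ?_, ?_, ?_, ?_, ?_, ?_, ?_⟩
  · -- associativity
    intro x y z
    simp only [mulOp, map_add, hπi, add_zero, lie_add, add_lie]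
    abel
  · -- identity
    intro x
    constructor <;> simp [mulOp]
  · -- inverses
    intro x
    exact ⟨-x, by simp [mulOp], by simp [mulOp]⟩
  · -- finiteness
    exact Finite.of_equiv _ bK.equivFun.toEquiv.symm
  · -- exponent divides p^2
    intro x
    rw [hopPow]
    exact hp2K x
  · -- pC condition
    intro x hx y
    rw [hopPow] at hx
    have h1 : i (π x) = 0 := by rw [hip, hx]
    have h2 : π x = 0 := hi (by rw [h1, map_zero])
    simp [mulOp, h2, add_comm]
  · exact hπmul
  · -- range i = ker π
    ext x
    constructor
    · rintro ⟨l, rfl⟩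
      exact hπi l
    · intro hx
      obtain ⟨l, hl⟩ := hker x hx
      exact ⟨l, hl⟩
  · -- i(L) central
    intro l y
    simp [mulOp, hπi, add_comm]
  · -- operation restricts to addition on i(L)
    intro l l'
    simp [mulOp, hπi]
  · -- i(L) is elementary abelian (exponent p)
    intro l
    rw [hopPow]
    exact hpi l
  · -- Frattini: every element of i(L) is a p-th power
    intro l
    obtain ⟨x, rfl⟩ := hπ l
    exact ⟨x, by rw [hopPow, ← hip]⟩
end
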